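/- arXiv:1910.12110 — 2 statements merged into one kernel-verified Lean document; each statement's English description precedes it below -/
import Mathlib

section
/- If G is a 2-self-centered graph with a triangle u, v, w in which deg(u) = deg(v) = 2, then G cannot be 2-self-centered; equivalently, no 2-self-centered graph contains a triangle with two vertices of degree 2. -/
/-!
In the triangle `u v w` the neighbourhoods of `u` and `v` are forced: `N(u) = {v, w}` and
`N(v) = {u, w}`. Every vertex lies within distance `2` of `u`, and any path of length at most
two out of `u` enters through `v` or `w` and therefore ends in `{u, v, w} ∪ N(w)`. So `w` is
adjacent to every other vertex, its eccentricity is at most `1`, and the radius cannot be `2`.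
-/

open SimpleGraph

variable {V : Type*}

/-- Eccentricity of a vertex: maximum distance to any vertex. -/
noncomputable def ecc (G : SimpleGraph V) [Fintype V] (v : V) : ℕ :=
  Finset.univ.sup fun u => G.dist v u

/-- Diameter: maximum eccentricity. -/
noncomputable def gdiam (G : SimpleGraph V) [Fintype V] : ℕ :=
  Finset.univ.sup fun v => ecc G v

/-- Radius: minimum eccentricity. -/
noncomputable def grad (G : SimpleGraph V) [Fintype V] : ℕ :=
  sInf (Set.range fun v => ecc G v)

/-- A graph is 2-self-centered if it is connected and diam = rad = 2. -/
def TwoSC (G : SimpleGraph V) [Fintype V] : Prop :=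
  G.Connected ∧ gdiam G = 2 ∧ grad G = 2

section Eccentricity

variable [Fintype V] (G : SimpleGraph V)

lemma dist_le_ecc (v u : V) : G.dist v u ≤ ecc G v :=
  Finset.le_sup (Finset.mem_univ u)

lemma ecc_le_gdiam (v : V) : ecc G v ≤ gdiam G :=
  Finset.le_sup (Finset.mem_univ v)

lemma grad_le_ecc (v : V) : grad G ≤ ecc G v :=
  Nat.sInf_le ⟨v, rfl⟩

lemma ecc_le_one_of_forall_adj {w : V} (h : ∀ x, x ≠ w → G.Adj w x) : ecc G w ≤ 1 := by
  refine Finset.sup_le fun x _ => ?_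
  by_cases hx : x = w
  · simp [hx]
  · exact (dist_eq_one_iff_adj.2 (h x hx)).le

end Eccentricity

namespace SimpleGraph

variable {G : SimpleGraph V}

lemma eq_or_eq_of_adj_of_degree_eq_two {u a b x : V} [Fintype (G.neighborSet u)]
    (ha : G.Adj u a) (hb : G.Adj u b) (hab : a ≠ b) (hdeg : G.degree u = 2)
    (hx : G.Adj u x) : x = a ∨ x = b := by
  classical
  have hN : ({a, b} : Finset V) = G.neighborFinset u := by
    refine Finset.eq_of_subset_of_card_le ?_ ?_
    · simp [Finset.insert_subset_iff, ha, hb]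
    · rw [card_neighborFinset_eq_degree, hdeg, Finset.card_pair hab]
  have : x ∈ ({a, b} : Finset V) := hN ▸ (mem_neighborFinset G u x).2 hx
  simpa using this

lemma Connected.eq_or_adj_or_exists_adj_adj_of_dist_le_two (hG : G.Connected) {u x : V}
    (h : G.dist u x ≤ 2) : u = x ∨ G.Adj u x ∨ ∃ y, G.Adj u y ∧ G.Adj y x := by
  obtain ⟨p, hp⟩ := hG.exists_walk_length_eq_dist u x
  rw [← hp] at h
  match p, h with
  | .nil, _ => exact .inl rfl
  | .cons hux .nil, _ => exact .inr (.inl hux)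
  | .cons huy (.cons hyx .nil), _ => exact .inr (.inr ⟨_, huy, hyx⟩)
  | .cons _ (.cons _ (.cons _ _)), h => simp at h

lemma Connected.adj_of_triangle_of_degree_eq_two {u v w : V} [Fintype (G.neighborSet u)]
    [Fintype (G.neighborSet v)] (hG : G.Connected) (hdist : ∀ x, G.dist u x ≤ 2)
    (huv : G.Adj u v) (hvw : G.Adj v w) (huw : G.Adj u w)
    (hdu : G.degree u = 2) (hdv : G.degree v = 2) (x : V) (hxw : x ≠ w) : G.Adj w x := by
  have hNu {y} := eq_or_eq_of_adj_of_degree_eq_two huv huw hvw.ne hdu (x := y)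
  have hNv {y} := eq_or_eq_of_adj_of_degree_eq_two huv.symm hvw huw.ne hdv (x := y)
  rcases hG.eq_or_adj_or_exists_adj_adj_of_dist_le_two (hdist x) with rfl | hux | ⟨y, huy, hyx⟩
  · exact huw.symm
  · rcases hNu hux with rfl | rfl
    · exact hvw.symm
    · exact absurd rfl hxw
  · rcases hNu huy with rfl | rfl
    · rcases hNv hyx with rfl | rfl
      · exact huw.symm
      · exact absurd rfl hxw
    · exact hyx

end SimpleGraph

/-- No 2-self-centered graph contains a triangle with two vertices of degree 2. -/
theorem stmt_11 [Fintype V] (G : SimpleGraph V) [DecidableRel G.Adj]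
    (h2sc : TwoSC G) (u v w : V)
    (huv : G.Adj u v) (hvw : G.Adj v w) (huw : G.Adj u w)
    (hdu : G.degree u = 2) (hdv : G.degree v = 2) :
    False := by
  obtain ⟨hconn, hdiam, hrad⟩ := h2sc
  have hdist : ∀ x, G.dist u x ≤ 2 := fun x =>
    hdiam ▸ (dist_le_ecc G u x).trans (ecc_le_gdiam G u)
  have hw : grad G ≤ 1 := (grad_le_ecc G w).trans <| ecc_le_one_of_forall_adj G <|
    hconn.adj_of_triangle_of_degree_eq_two hdist huv hvw huw hdu hdv
  omega
end

section
/- If G is a triangle-free 2-self-centered graph, Y' is a maximal independent set of G, and Z' is a maximal independent set of G − Y', and a ∈ Z' is a vertex with no neighbor outside Y' ∪ Z', then a is adjacent to every vertex of Y'. -/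
open SimpleGraph

variable {V : Type*}

/-- An independent set of a graph. -/
def IsIndep (G : SimpleGraph V) (S : Set V) : Prop :=
  S.Pairwise fun x y => ¬ G.Adj x y

theorem dist_le_gdiam [Fintype V] (G : SimpleGraph V) (u v : V) : G.dist u v ≤ gdiam G :=
  (Finset.le_sup (f := G.dist u) (Finset.mem_univ v)).trans
    (Finset.le_sup (f := ecc G) (Finset.mem_univ u))

theorem commonNeighbors_nonempty_of_gdiam_le_two [Fintype V] {G : SimpleGraph V}
    (hconn : G.Preconnected) (hdiam : gdiam G ≤ 2) {u v : V} (hne : u ≠ v) (hnadj : ¬G.Adj u v) :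
    (G.commonNeighbors u v).Nonempty := by
  by_contra hempty
  have hfar : 2 < G.edist u v :=
    two_lt_edist_iff.mpr ⟨hne, hnadj, Set.not_nonempty_iff_eq_empty.mp hempty⟩
  rw [← (hconn u v).coe_dist_eq_edist] at hfar
  exact (dist_le_gdiam G u v).trans hdiam |>.not_gt (by exact_mod_cast hfar)

theorem stmt_17_general [Fintype V] (G : SimpleGraph V)
    (h2sc : TwoSC G)
    (Y' Z' : Set V)
    (hYind : IsIndep G Y')
    (hZsub : Z' ⊆ Y'ᶜ) (hZind : IsIndep G Z')
    (a : V) (ha : a ∈ Z')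
    (hquiet : ∀ x : V, G.Adj a x → x ∈ Y' ∪ Z') :
    ∀ y ∈ Y', G.Adj a y := by
  intro y hy
  by_contra hnadj
  have hne : a ≠ y := fun h => hZsub ha (h ▸ hy)
  obtain ⟨w, hw⟩ :=
    commonNeighbors_nonempty_of_gdiam_le_two h2sc.1.preconnected h2sc.2.1.le hne hnadj
  obtain ⟨haw, hyw⟩ := G.mem_commonNeighbors.mp hw
  rcases hquiet w haw with hwY | hwZ
  · exact hYind hy hwY (G.ne_of_adj hyw) hyw
  · exact hZind ha hwZ (G.ne_of_adj haw) haw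

/-- In a triangle-free 2-self-centered graph with Y' a maximal independent set, Z' a maximal
independent set of G - Y', any a ∈ Z' with no neighbor outside Y' ∪ Z' is adjacent to
every vertex of Y'. -/
theorem stmt_17 [Fintype V] (G : SimpleGraph V)
    (h2sc : TwoSC G) (htf : G.CliqueFree 3)
    (Y' Z' : Set V)
    (hYind : IsIndep G Y')
    (hYmax : ∀ S : Set V, IsIndep G S → Y' ⊆ S → S = Y')
    (hZsub : Z' ⊆ Y'ᶜ) (hZind : IsIndep G Z')
    (hZmax : ∀ S : Set V, S ⊆ Y'ᶜ → IsIndep G S → Z' ⊆ S → S = Z')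
    (a : V) (ha : a ∈ Z')
    (hquiet : ∀ x : V, G.Adj a x → x ∈ Y' ∪ Z') :
    ∀ y ∈ Y', G.Adj a y :=
  stmt_17_general G h2sc Y' Z' hYind hZsub hZind a ha hquiet
end
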